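/- The second central moment Ω_n²(x) := D_n*((t−x)²; x) satisfies Ω_n²(x) = (2x/n)[1 + μ(e_μ(−nx)/e_μ(nx))(2A(−1)−A(1))/A(1)] + (1/n²)(e_μ(−nx)/e_μ(nx))[2μ(A'(1)+A'(−1))/A(1) + μ(2λ+3)(A(1)−A(−1))/A(1)] + (1/n²)[A''(1)/A(1) + 2(λ+2)A'(1)/A(1) + (λ+1)(λ+2)] + (2μ²/n²)(A(1)−A(−1))/A(1); consequently, Ω_n²(x) → 0 as n → ∞ uniformly on compact subsets of [0, ∞). -/

import Mathlib

open scoped BigOperators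
open MeasureTheory Filter

/-- Parity indicator: 0 for even, 1 for odd. -/
def theta (j : ℕ) : ℝ := if j % 2 = 1 then 1 else 0

/-- Dunkl coefficients via the recursion. -/
noncomputable def gamRec (μ : ℝ) : ℕ → ℝ
  | 0 => 1
  | k + 1 => ((k : ℝ) + 1 + 2 * μ * theta (k + 1)) * gamRec μ k

/-- Dunkl exponential. -/
noncomputable def emu (μ : ℝ) (x : ℝ) : ℝ := ∑' k : ℕ, x ^ k / gamRec μ k

/-- Dunkl-Appell polynomials. -/
noncomputable def pk (μ : ℝ) (a : ℕ → ℝ) (k : ℕ) (x : ℝ) : ℝ :=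
  ∑ j ∈ Finset.range (k + 1),
    (gamRec μ k / (gamRec μ j * gamRec μ (k - j))) * a (k - j) * x ^ j

/-- The analytic function A. -/
noncomputable def Afun (μ : ℝ) (a : ℕ → ℝ) (t : ℝ) : ℝ := ∑' r : ℕ, a r * t ^ r / gamRec μ r

/-- Dunkl-Appell Gamma-type (Szász–Durrmeyer) operator. -/
noncomputable def Dop (μ lam : ℝ) (a : ℕ → ℝ) (n : ℕ) (f : ℝ → ℝ) (x : ℝ) : ℝ :=
  (1 / (emu μ (n * x) * Afun μ a 1)) *
    ∑' k : ℕ, (pk μ a k (n * x) / gamRec μ k) *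
      ((n : ℝ) ^ ((k : ℝ) + 2 * μ * theta k + lam + 1) /
        Real.Gamma ((k : ℝ) + 2 * μ * theta k + lam + 1)) *
      ∫ t in Set.Ioi (0 : ℝ), Real.exp (-(n : ℝ) * t) * t ^ ((k : ℝ) + 2 * μ * theta k + lam) * f t

/-- Analyticity (radius of convergence > 1) hypothesis for A. -/
def AnalyticHyp (μ : ℝ) (a : ℕ → ℝ) : Prop :=
  ∃ R > (1 : ℝ), ∀ t : ℝ, |t| < R → Summable (fun r : ℕ => a r * t ^ r / gamRec μ r)

/-- Modulus of continuity on [0,∞). -/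
noncomputable def modCont (f : ℝ → ℝ) (δ : ℝ) : ℝ :=
  sSup {d : ℝ | ∃ x y : ℝ, 0 ≤ x ∧ 0 ≤ y ∧ |x - y| ≤ δ ∧ d = |f x - f y|}

/-- sup norm on [0,∞). -/
noncomputable def CBnorm (g : ℝ → ℝ) : ℝ := sSup ((fun x => |g x|) '' Set.Ici 0)

/-- Dunkl coefficients via the Gamma-function formulas of the paper. -/
noncomputable def gamG (μ : ℝ) (m : ℕ) : ℝ :=
  if m % 2 = 0 then
    2 ^ m * (Nat.factorial (m / 2)) * Real.Gamma ((m / 2 : ℕ) + μ + 1 / 2) / Real.Gamma (μ + 1 / 2)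
  else
    2 ^ m * (Nat.factorial ((m - 1) / 2)) * Real.Gamma (((m - 1) / 2 : ℕ) + μ + 3 / 2) / Real.Gamma (μ + 1 / 2)

/-! Write `w = dunklWeight μ`. The second moment about `x` of the Gamma density with exponent
`w k + lam` is a quadratic polynomial in `w k`, so `Ω_n²(x)` is a combination of the sums
`∑ₖ (pₖ(nx) / γ_μ(k)) (w k) ^ m`, `m ≤ 2`. Now `pₖ(y) / γ_μ(k)` is the Cauchy product of
`yʲ / γ_μ(j)` and `a_r / γ_μ(r)`, and `w (r + j) = w r + w j - 4 μ θ(r) θ(j)`, so these sums factor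
into moments of the two series. For the exponential series, `w (k + 1) y^(k+1) / γ_μ(k+1)` equals
`y · yᵏ / γ_μ(k)`, which expresses its moments through `e_μ(± y)`; for `A` they are values of
`A`, `A'`, `A''` at `± 1`. Uniform convergence follows from `|e_μ(-y)| ≤ e_μ(y)`: every term is
`O(1/n)` on bounded sets. -/

open Finset

lemma theta_eq (k : ℕ) : theta k = (1 - (-1 : ℝ) ^ k) / 2 := by
  rcases Nat.even_or_odd k with h | h
  · simp [theta, h.neg_one_pow, Nat.even_iff.mp h]
  · norm_num [theta, h.neg_one_pow, Nat.odd_iff.mp h]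

lemma theta_nonneg (k : ℕ) : 0 ≤ theta k := by
  unfold theta; split <;> norm_num

lemma theta_mul_self (k : ℕ) : theta k * theta k = theta k := by
  unfold theta; split <;> norm_num

lemma theta_succ (k : ℕ) : theta (k + 1) = 1 - theta k := by
  rw [theta_eq, theta_eq, pow_succ]; ring

lemma theta_add (r j : ℕ) : theta (r + j) = theta r + theta j - 2 * theta r * theta j := by
  rw [theta_eq, theta_eq, theta_eq, pow_add]; ring

/-- The ratio `γ_μ(k) / γ_μ(k - 1)`; the Gamma densities in `Dop` have exponents
`dunklWeight μ k + lam`. -/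
noncomputable def dunklWeight (μ : ℝ) (k : ℕ) : ℝ := (k : ℝ) + 2 * μ * theta k

@[simp] lemma dunklWeight_zero (μ : ℝ) : dunklWeight μ 0 = 0 := by
  simp [dunklWeight, theta]

lemma dunklWeight_nonneg {μ : ℝ} (hμ : 0 ≤ μ) (k : ℕ) : 0 ≤ dunklWeight μ k := by
  have := theta_nonneg k
  unfold dunklWeight; positivity

lemma dunklWeight_succ (μ : ℝ) (k : ℕ) :
    dunklWeight μ (k + 1) = dunklWeight μ k + 1 + 2 * μ * (1 - 2 * theta k) := by
  rw [dunklWeight, dunklWeight, theta_succ]; push_cast; ring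

lemma dunklWeight_add (μ : ℝ) (r j : ℕ) :
    dunklWeight μ (r + j) = dunklWeight μ r + dunklWeight μ j - 4 * μ * theta r * theta j := by
  rw [dunklWeight, dunklWeight, dunklWeight, theta_add]; push_cast; ring

lemma one_le_dunklWeight_succ {μ : ℝ} (hμ : 0 ≤ μ) (k : ℕ) : 1 ≤ dunklWeight μ (k + 1) := by
  have := theta_nonneg (k + 1)
  have : 0 ≤ 2 * μ * theta (k + 1) := by positivity
  rw [dunklWeight]; push_cast; linarith [(Nat.cast_nonneg k : (0 : ℝ) ≤ k)]

lemma gamRec_succ (μ : ℝ) (k : ℕ) : gamRec μ (k + 1) = dunklWeight μ (k + 1) * gamRec μ k := by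
  rw [gamRec, dunklWeight]; push_cast; ring

lemma factorial_le_gamRec {μ : ℝ} (hμ : 0 ≤ μ) (k : ℕ) : (k.factorial : ℝ) ≤ gamRec μ k := by
  induction k with
  | zero => simp [gamRec]
  | succ k ih =>
    have hk : ((k + 1 : ℕ) : ℝ) ≤ dunklWeight μ (k + 1) := by
      have := theta_nonneg (k + 1)
      rw [dunklWeight]; nlinarith
    rw [gamRec_succ, Nat.factorial_succ, Nat.cast_mul]
    exact mul_le_mul hk ih (by positivity) (dunklWeight_nonneg hμ _)

lemma gamRec_pos {μ : ℝ} (hμ : 0 ≤ μ) (k : ℕ) : 0 < gamRec μ k :=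
  (Nat.cast_pos.mpr k.factorial_pos).trans_le (factorial_le_gamRec hμ k)

lemma hasSum_sum_antidiagonal_mul {f g : ℕ → ℝ} {s t : ℝ} (hf : HasSum f s) (hg : HasSum g t) :
    HasSum (fun k => ∑ p ∈ antidiagonal k, f p.1 * g p.2) (s * t) := by
  have hf' : Summable fun r => ‖f r‖ := hf.summable.norm
  have hg' : Summable fun r => ‖g r‖ := hg.summable.norm
  have h := (summable_norm_sum_mul_antidiagonal_of_summable_norm hf' hg').of_norm
  rw [← hf.tsum_eq, ← hg.tsum_eq, tsum_mul_tsum_eq_tsum_sum_antidiagonal_of_summable_norm hf' hg']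
  exact h.hasSum

lemma HasSum.congr_fun_of_eq {f g : ℕ → ℝ} {s t : ℝ} (h : HasSum f s) (hfg : ∀ r, g r = f r)
    (hst : t = s) : HasSum g t :=
  hst ▸ h.congr_fun hfg

lemma hasSum_of_hasSum_succ {f : ℕ → ℝ} {s : ℝ} (h0 : f 0 = 0)
    (h : HasSum (fun k => f (k + 1)) s) : HasSum f s := by
  simpa [h0] using (hasSum_nat_add_iff 1).mp h

section CauchyMoments

variable {μ : ℝ} {f g : ℕ → ℝ}
  {F₀ Fθ F₁ F₁θ F₂ G₀ Gθ G₁ G₁θ G₂ : ℝ}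

lemma hasSum_sum_antidiagonal_mul_dunklWeight
    (hf₀ : HasSum f F₀) (hfθ : HasSum (fun r => f r * theta r) Fθ)
    (hf₁ : HasSum (fun r => f r * dunklWeight μ r) F₁)
    (hg₀ : HasSum g G₀) (hgθ : HasSum (fun r => g r * theta r) Gθ)
    (hg₁ : HasSum (fun r => g r * dunklWeight μ r) G₁) :
    HasSum (fun k => (∑ p ∈ antidiagonal k, f p.1 * g p.2) * dunklWeight μ k)
      (F₁ * G₀ + F₀ * G₁ - 4 * μ * (Fθ * Gθ)) := by
  refine (((hasSum_sum_antidiagonal_mul hf₁ hg₀).add (hasSum_sum_antidiagonal_mul hf₀ hg₁)).sub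
    ((hasSum_sum_antidiagonal_mul hfθ hgθ).mul_left (4 * μ))).congr_fun fun k => ?_
  rw [sum_mul, mul_sum, ← sum_add_distrib, ← sum_sub_distrib]
  refine sum_congr rfl fun p hp => ?_
  rw [← mem_antidiagonal.mp hp, dunklWeight_add]
  ring

lemma hasSum_sum_antidiagonal_mul_dunklWeight_sq
    (hf₀ : HasSum f F₀) (hfθ : HasSum (fun r => f r * theta r) Fθ)
    (hf₁ : HasSum (fun r => f r * dunklWeight μ r) F₁)
    (hf₁θ : HasSum (fun r => f r * dunklWeight μ r * theta r) F₁θ)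
    (hf₂ : HasSum (fun r => f r * dunklWeight μ r ^ 2) F₂)
    (hg₀ : HasSum g G₀) (hgθ : HasSum (fun r => g r * theta r) Gθ)
    (hg₁ : HasSum (fun r => g r * dunklWeight μ r) G₁)
    (hg₁θ : HasSum (fun r => g r * dunklWeight μ r * theta r) G₁θ)
    (hg₂ : HasSum (fun r => g r * dunklWeight μ r ^ 2) G₂) :
    HasSum (fun k => (∑ p ∈ antidiagonal k, f p.1 * g p.2) * dunklWeight μ k ^ 2)
      (F₂ * G₀ + F₀ * G₂ + 2 * (F₁ * G₁) + 16 * μ ^ 2 * (Fθ * Gθ)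
        - 8 * μ * (F₁θ * Gθ) - 8 * μ * (Fθ * G₁θ)) := by
  refine ((((((hasSum_sum_antidiagonal_mul hf₂ hg₀).add (hasSum_sum_antidiagonal_mul hf₀ hg₂)).add
    ((hasSum_sum_antidiagonal_mul hf₁ hg₁).mul_left 2)).add
    ((hasSum_sum_antidiagonal_mul hfθ hgθ).mul_left (16 * μ ^ 2))).sub
    ((hasSum_sum_antidiagonal_mul hf₁θ hgθ).mul_left (8 * μ))).sub
    ((hasSum_sum_antidiagonal_mul hfθ hg₁θ).mul_left (8 * μ))).congr_fun fun k => ?_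
  simp only [sum_mul, mul_sum, ← sum_add_distrib, ← sum_sub_distrib]
  refine sum_congr rfl fun p hp => ?_
  rw [← mem_antidiagonal.mp hp, dunklWeight_add]
  linear_combination (16 * μ ^ 2 * f p.1 * g p.2) *
    (theta p.2 ^ 2 * theta_mul_self p.1 + theta p.1 * theta_mul_self p.2)

end CauchyMoments

section DunklExponential

variable {μ y C₀ Cθ : ℝ} {c : ℕ → ℝ}

-- `c` is an eigenvector, with eigenvalue `y`, of the Dunkl derivative
-- `c ↦ (k ↦ c (k + 1) * dunklWeight μ (k + 1))`; the terms of `emu μ y` are the example.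
variable (hc : ∀ k, c (k + 1) * dunklWeight μ (k + 1) = y * c k) (hc₀ : HasSum c C₀)
  (hcθ : HasSum (fun k => c k * theta k) Cθ)
include hc hc₀

lemma hasSum_mul_dunklWeight_of_eigen : HasSum (fun k => c k * dunklWeight μ k) (y * C₀) :=
  hasSum_of_hasSum_succ (by simp) ((hc₀.mul_left y).congr_fun hc)

include hcθ

lemma hasSum_mul_dunklWeight_mul_theta_of_eigen :
    HasSum (fun k => c k * dunklWeight μ k * theta k) (y * (C₀ - Cθ)) :=
  hasSum_of_hasSum_succ (by simp) (((hc₀.sub hcθ).mul_left y).congr_fun fun k => by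
    rw [hc, theta_succ]; ring)

lemma hasSum_mul_dunklWeight_sq_of_eigen :
    HasSum (fun k => c k * dunklWeight μ k ^ 2)
      (y * (y * C₀ + C₀ + 2 * μ * (C₀ - 2 * Cθ))) :=
  hasSum_of_hasSum_succ (by simp)
    (((((hasSum_mul_dunklWeight_of_eigen hc hc₀).add hc₀).add
      ((hc₀.sub (hcθ.mul_left 2)).mul_left (2 * μ))).mul_left y).congr_fun fun k => by
        rw [sq, ← mul_assoc, hc, dunklWeight_succ]; ring)

end DunklExponential

noncomputable def emuTerm (μ y : ℝ) (k : ℕ) : ℝ := y ^ k / gamRec μ k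

section

variable {μ : ℝ} (hμ : 0 ≤ μ) (y : ℝ)
include hμ

lemma emuTerm_succ_mul_dunklWeight (k : ℕ) :
    emuTerm μ y (k + 1) * dunklWeight μ (k + 1) = y * emuTerm μ y k := by
  have := (zero_lt_one.trans_le (one_le_dunklWeight_succ hμ k)).ne'
  have := (gamRec_pos hμ k).ne'
  rw [emuTerm, emuTerm, gamRec_succ, pow_succ]
  field_simp

lemma hasSum_emuTerm : HasSum (emuTerm μ y) (emu μ y) := by
  refine (Summable.of_norm_bounded (Real.summable_pow_div_factorial |y|) fun k => ?_).hasSum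
  rw [emuTerm, Real.norm_eq_abs, abs_div, abs_pow, abs_of_pos (gamRec_pos hμ k)]
  exact div_le_div_of_nonneg_left (by positivity) (by positivity) (factorial_le_gamRec hμ k)

lemma hasSum_emuTerm_mul_theta :
    HasSum (fun k => emuTerm μ y k * theta k) ((emu μ y - emu μ (-y)) / 2) := by
  refine (((hasSum_emuTerm hμ y).sub (hasSum_emuTerm hμ (-y))).div_const 2).congr_fun fun k => ?_
  rw [emuTerm, emuTerm, theta_eq, neg_pow]
  ring

lemma one_le_emu (hy : 0 ≤ y) : 1 ≤ emu μ y := by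
  have h := (hasSum_emuTerm hμ y).summable.le_tsum 0 fun k _ =>
    div_nonneg (pow_nonneg hy k) (gamRec_pos hμ k).le
  simpa [emuTerm, gamRec, emu] using h

lemma abs_emu_neg_div_emu_le_one (hy : 0 ≤ y) : |emu μ (-y) / emu μ y| ≤ 1 := by
  have hE := zero_lt_one.trans_le (one_le_emu hμ y hy)
  have hterm : ∀ k, ‖emuTerm μ (-y) k‖ = emuTerm μ y k := fun k => by
    rw [emuTerm, emuTerm, Real.norm_eq_abs, abs_div, abs_pow, abs_neg, abs_of_nonneg hy,
      abs_of_pos (gamRec_pos hμ k)]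
  rw [abs_div, abs_of_pos hE, div_le_one hE, ← Real.norm_eq_abs,
    ← (hasSum_emuTerm hμ (-y)).tsum_eq, ← (hasSum_emuTerm hμ y).tsum_eq]
  simp_rw [← hterm]
  exact norm_tsum_le_tsum_norm (by simpa only [hterm] using (hasSum_emuTerm hμ y).summable)

end

def derivCoeff (c : ℕ → ℝ) (r : ℕ) : ℝ := (r + 1) * c (r + 1)

section PowerSeries

variable {c : ℕ → ℝ} {R : ℝ} (hc : ∀ t, |t| < R → Summable fun r => c r * t ^ r)
include hc

lemma summable_derivCoeff_mul_pow {t : ℝ} (ht : |t| < R) :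
    Summable fun r => derivCoeff c r * t ^ r := by
  obtain ⟨ρ, htρ, hρR⟩ := exists_between ht
  have hρ : 0 < ρ := (abs_nonneg t).trans_lt htρ
  obtain ⟨M, hM⟩ : ∃ M, ∀ r, |c r * ρ ^ r| ≤ M :=
    ⟨_, fun r => (hc ρ (by rwa [abs_of_pos hρ])).abs.le_tsum r fun _ _ => abs_nonneg _⟩
  have hq : ‖|t| / ρ‖ < 1 := by
    rw [Real.norm_eq_abs, abs_div, abs_abs, abs_of_pos hρ, div_lt_one hρ]; exact htρ
  refine Summable.of_norm_bounded
    (((summable_pow_mul_geometric_of_norm_lt_one 1 hq).add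
      (summable_geometric_of_norm_lt_one hq)).mul_left (M / ρ)) fun r => ?_
  have hcr : |c (r + 1)| ≤ M / ρ ^ (r + 1) := by
    rw [le_div_iff₀ (by positivity)]
    simpa [abs_mul, abs_of_pos hρ] using hM (r + 1)
  calc ‖derivCoeff c r * t ^ r‖ = (r + 1) * |c (r + 1)| * |t| ^ r := by
        rw [derivCoeff, Real.norm_eq_abs, abs_mul, abs_mul, abs_pow]; norm_cast
    _ ≤ (r + 1) * (M / ρ ^ (r + 1)) * |t| ^ r := by gcongr
    _ = M / ρ * ((r : ℝ) ^ 1 * (|t| / ρ) ^ r + (|t| / ρ) ^ r) := by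
        rw [div_pow, pow_one, pow_succ]; field_simp

lemma hasDerivAt_tsum_mul_pow {t : ℝ} (ht : |t| < R) :
    HasDerivAt (fun s => ∑' r, c r * s ^ r) (∑' r, derivCoeff c r * t ^ r) t := by
  obtain ⟨ρ, htρ, hρR⟩ := exists_between ht
  replace hρR : |ρ| < R := by rwa [abs_of_pos ((abs_nonneg t).trans_lt htρ)]
  have hbound : ∀ r, ∀ s ∈ Metric.ball (0 : ℝ) ρ,
      ‖c r * (r * s ^ (r - 1))‖ ≤ |c r * (r * ρ ^ (r - 1))| := by
    intro r s hs
    rw [mem_ball_zero_iff, Real.norm_eq_abs] at hs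
    rw [Real.norm_eq_abs, abs_mul, abs_mul, abs_mul, abs_mul, abs_pow, abs_pow,
      abs_of_pos ((abs_nonneg s).trans_lt hs)]
    gcongr
  have hu : Summable fun r => |c r * (r * ρ ^ (r - 1))| := by
    refine (summable_nat_add_iff 1).mp ((summable_derivCoeff_mul_pow hc hρR).abs.congr fun r => ?_)
    rw [derivCoeff]; push_cast; ring_nf
  have hderiv := hasDerivAt_tsum_of_isPreconnected hu Metric.isOpen_ball
    (convex_ball (0 : ℝ) ρ).isPreconnected
    (fun r s _ => (hasDerivAt_pow r s).const_mul (c r)) hbound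
    (Metric.mem_ball_self ((abs_nonneg t).trans_lt htρ))
    (hc 0 (by rw [abs_zero]; exact (abs_nonneg t).trans_lt ht))
    (mem_ball_zero_iff.mpr htρ)
  refine hderiv.congr_deriv ?_
  rw [(Summable.of_norm_bounded hu (hbound · t (mem_ball_zero_iff.mpr htρ))).tsum_eq_zero_add]
  simp only [Nat.cast_zero, zero_mul, mul_zero, zero_add, Nat.add_sub_cancel, derivCoeff]
  exact tsum_congr fun r => by push_cast; ring

lemma deriv_deriv_tsum_mul_pow {t : ℝ} (ht : |t| < R) :
    deriv (deriv fun s => ∑' r, c r * s ^ r) t = ∑' r, derivCoeff (derivCoeff c) r * t ^ r := by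
  have hderiv : deriv (fun s => ∑' r, c r * s ^ r) =ᶠ[nhds t]
      fun s => ∑' r, derivCoeff c r * s ^ r := by
    filter_upwards [(isOpen_lt continuous_abs continuous_const).mem_nhds ht] with s hs
    exact (hasDerivAt_tsum_mul_pow hc hs).deriv
  rw [hderiv.deriv_eq]
  exact (hasDerivAt_tsum_mul_pow (fun s hs => summable_derivCoeff_mul_pow hc hs) ht).deriv

lemma hasSum_mul_natCast_mul_pow {t : ℝ} (ht : |t| < R) :
    HasSum (fun r => c r * r * t ^ r) (t * deriv (fun s => ∑' r, c r * s ^ r) t) := by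
  rw [(hasDerivAt_tsum_mul_pow hc ht).deriv]
  refine hasSum_of_hasSum_succ (by simp)
    (((summable_derivCoeff_mul_pow hc ht).hasSum.mul_left t).congr_fun fun r => ?_)
  rw [derivCoeff]; push_cast; ring

lemma hasSum_mul_natCast_mul_natCast_sub_one_mul_pow {t : ℝ} (ht : |t| < R) :
    HasSum (fun r => c r * (r * (r - 1)) * t ^ r)
      (t ^ 2 * deriv (deriv fun s => ∑' r, c r * s ^ r) t) := by
  rw [deriv_deriv_tsum_mul_pow hc ht]
  refine hasSum_of_hasSum_succ (by simp) (hasSum_of_hasSum_succ (by simp)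
    (((summable_derivCoeff_mul_pow (fun s hs => summable_derivCoeff_mul_pow hc hs)
      ht).hasSum.mul_left (t ^ 2)).congr_fun fun r => ?_))
  rw [derivCoeff, derivCoeff]; push_cast; ring

end PowerSeries

noncomputable def afunCoeff (μ : ℝ) (a : ℕ → ℝ) (r : ℕ) : ℝ := a r / gamRec μ r

lemma Afun_eq_tsum (μ : ℝ) (a : ℕ → ℝ) : Afun μ a = fun t => ∑' r, afunCoeff μ a r * t ^ r :=
  funext fun t => tsum_congr fun r => by rw [afunCoeff, div_mul_eq_mul_div]

lemma neg_one_pow_eq_one_sub_two_mul_theta (k : ℕ) : (-1 : ℝ) ^ k = 1 - 2 * theta k := by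
  rw [theta_eq]; ring

namespace AnalyticHyp

variable {μ : ℝ} {a : ℕ → ℝ} (hA : AnalyticHyp μ a)
include hA

lemma summable_afunCoeff_mul_pow :
    ∃ R > 1, ∀ t, |t| < R → Summable fun r => afunCoeff μ a r * t ^ r := by
  obtain ⟨R, hR, hsum⟩ := hA
  exact ⟨R, hR, fun t ht => (hsum t ht).congr fun r => by rw [afunCoeff, div_mul_eq_mul_div]⟩

variable {t : ℝ} (ht : |t| ≤ 1)
include ht

lemma hasSum_afunCoeff_mul_pow : HasSum (fun r => afunCoeff μ a r * t ^ r) (Afun μ a t) := by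
  obtain ⟨R, hR, hsum⟩ := hA.summable_afunCoeff_mul_pow
  rw [Afun_eq_tsum]
  exact (hsum t (ht.trans_lt hR)).hasSum

lemma hasSum_afunCoeff_mul_natCast_mul_pow :
    HasSum (fun r => afunCoeff μ a r * r * t ^ r) (t * deriv (Afun μ a) t) := by
  obtain ⟨R, hR, hsum⟩ := hA.summable_afunCoeff_mul_pow
  rw [Afun_eq_tsum]
  exact hasSum_mul_natCast_mul_pow hsum (ht.trans_lt hR)

lemma hasSum_afunCoeff_mul_natCast_mul_natCast_sub_one_mul_pow :
    HasSum (fun r => afunCoeff μ a r * (r * (r - 1)) * t ^ r)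
      (t ^ 2 * deriv (deriv (Afun μ a)) t) := by
  obtain ⟨R, hR, hsum⟩ := hA.summable_afunCoeff_mul_pow
  rw [Afun_eq_tsum]
  exact hasSum_mul_natCast_mul_natCast_sub_one_mul_pow hsum (ht.trans_lt hR)

end AnalyticHyp

section AfunMoments

variable {μ : ℝ} {a : ℕ → ℝ} (hA : AnalyticHyp μ a)
include hA

lemma hasSum_afunCoeff : HasSum (afunCoeff μ a) (Afun μ a 1) := by
  simpa using hA.hasSum_afunCoeff_mul_pow (t := 1) (by simp)

lemma hasSum_afunCoeff_mul_theta :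
    HasSum (fun r => afunCoeff μ a r * theta r) ((Afun μ a 1 - Afun μ a (-1)) / 2) := by
  refine (((hasSum_afunCoeff hA).sub (hA.hasSum_afunCoeff_mul_pow (t := -1) (by simp))).div_const
    2).congr_fun fun r => ?_
  rw [neg_one_pow_eq_one_sub_two_mul_theta]; ring

lemma hasSum_afunCoeff_mul_dunklWeight :
    HasSum (fun r => afunCoeff μ a r * dunklWeight μ r)
      (deriv (Afun μ a) 1 + μ * (Afun μ a 1 - Afun μ a (-1))) := by
  refine ((hA.hasSum_afunCoeff_mul_natCast_mul_pow (t := 1) (by simp)).add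
    ((hasSum_afunCoeff_mul_theta hA).mul_left (2 * μ))).congr_fun_of_eq (fun r => ?_) (by ring)
  rw [dunklWeight]; ring

lemma hasSum_afunCoeff_mul_dunklWeight_mul_theta :
    HasSum (fun r => afunCoeff μ a r * dunklWeight μ r * theta r)
      ((deriv (Afun μ a) 1 + deriv (Afun μ a) (-1)) / 2 + μ * (Afun μ a 1 - Afun μ a (-1))) := by
  refine ((((hA.hasSum_afunCoeff_mul_natCast_mul_pow (t := 1) (by simp)).sub
    (hA.hasSum_afunCoeff_mul_natCast_mul_pow (t := -1) (by simp))).div_const 2).add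
    ((hasSum_afunCoeff_mul_theta hA).mul_left (2 * μ))).congr_fun_of_eq (fun r => ?_) (by ring)
  rw [dunklWeight, neg_one_pow_eq_one_sub_two_mul_theta]
  linear_combination (2 * μ * afunCoeff μ a r) * theta_mul_self r

lemma hasSum_afunCoeff_mul_dunklWeight_sq :
    HasSum (fun r => afunCoeff μ a r * dunklWeight μ r ^ 2)
      (deriv (deriv (Afun μ a)) 1 + deriv (Afun μ a) 1
        + 2 * μ * (deriv (Afun μ a) 1 + deriv (Afun μ a) (-1))
        + 2 * μ ^ 2 * (Afun μ a 1 - Afun μ a (-1))) := by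
  have h₁ := hA.hasSum_afunCoeff_mul_natCast_mul_pow (t := 1) (by simp)
  refine ((((hA.hasSum_afunCoeff_mul_natCast_mul_natCast_sub_one_mul_pow (t := 1) (by simp)).add
    h₁).add ((h₁.sub (hA.hasSum_afunCoeff_mul_natCast_mul_pow (t := -1) (by simp))).mul_left
      (2 * μ))).add ((hasSum_afunCoeff_mul_theta hA).mul_left (4 * μ ^ 2))).congr_fun_of_eq
    (fun r => ?_) (by ring)
  rw [dunklWeight, neg_one_pow_eq_one_sub_two_mul_theta]
  linear_combination (4 * μ ^ 2 * afunCoeff μ a r) * theta_mul_self r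

end AfunMoments

section GammaDensity

open Set

variable {n : ℝ} (hn : 0 < n)
include hn

lemma integrableOn_exp_neg_mul_mul_rpow {s : ℝ} (hs : -1 < s) :
    IntegrableOn (fun t => Real.exp (-n * t) * t ^ s) (Ioi 0) := by
  simpa [mul_comm] using integrableOn_rpow_mul_exp_neg_mul_rpow hs zero_lt_one hn

lemma integral_exp_neg_mul_mul_rpow {s : ℝ} (hs : -1 < s) :
    ∫ t in Ioi 0, Real.exp (-n * t) * t ^ s = Real.Gamma (s + 1) / n ^ (s + 1) := by
  have h := Real.integral_rpow_mul_exp_neg_mul_Ioi (a := s + 1) (by linarith) hn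
  rw [add_sub_cancel_right, one_div, Real.inv_rpow hn.le] at h
  simpa [mul_comm, div_eq_inv_mul] using h

lemma rpow_div_Gamma_mul_integral_exp_neg_mul_rpow_mul_sub_sq {c : ℝ} (hc : -1 < c) (x : ℝ) :
    n ^ (c + 1) / Real.Gamma (c + 1) *
        ∫ t in Ioi 0, Real.exp (-n * t) * t ^ c * (t - x) ^ 2 =
      (c + 1) * (c + 2) / n ^ 2 - 2 * x * (c + 1) / n + x ^ 2 := by
  have hexpand : ∫ t in Ioi 0, Real.exp (-n * t) * t ^ c * (t - x) ^ 2 =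
      ∫ t in Ioi 0, (Real.exp (-n * t) * t ^ (c + 2) - 2 * x * (Real.exp (-n * t) * t ^ (c + 1))
        + x ^ 2 * (Real.exp (-n * t) * t ^ c)) := by
    refine setIntegral_congr_fun measurableSet_Ioi fun t (ht : 0 < t) => ?_
    simp only [Real.rpow_add ht, Real.rpow_one, Real.rpow_two]
    ring
  have h₂ := integrableOn_exp_neg_mul_mul_rpow hn (s := c + 2) (by linarith)
  have h₁ := integrableOn_exp_neg_mul_mul_rpow hn (s := c + 1) (by linarith)
  have h₀ := integrableOn_exp_neg_mul_mul_rpow hn hc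
  have h₂₁ : IntegrableOn (fun t => Real.exp (-n * t) * t ^ (c + 2)
      - 2 * x * (Real.exp (-n * t) * t ^ (c + 1))) (Ioi 0) := h₂.sub (h₁.const_mul (2 * x))
  rw [hexpand, integral_add h₂₁ (h₀.const_mul (x ^ 2)),
    integral_sub h₂ (h₁.const_mul (2 * x)), integral_const_mul, integral_const_mul,
    integral_exp_neg_mul_mul_rpow hn (by linarith), integral_exp_neg_mul_mul_rpow hn (by linarith),
    integral_exp_neg_mul_mul_rpow hn hc]
  have hΓ : 0 < Real.Gamma (c + 1) := Real.Gamma_pos_of_pos (by linarith)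
  have hΓ₂ : Real.Gamma (c + 1 + 1) = (c + 1) * Real.Gamma (c + 1) :=
    Real.Gamma_add_one (by linarith)
  have hΓ₃ : Real.Gamma (c + 2 + 1) = (c + 2) * ((c + 1) * Real.Gamma (c + 1)) := by
    rw [Real.Gamma_add_one (by linarith), show c + 2 = c + 1 + 1 by ring, hΓ₂]
  have hn₂ : n ^ (c + 2 + 1) = n ^ (c + 1) * n ^ 2 := by
    rw [show c + 2 + 1 = c + 1 + 2 by ring, Real.rpow_add hn, Real.rpow_two]
  have hn₁ : n ^ (c + 1 + 1) = n ^ (c + 1) * n := by rw [Real.rpow_add hn, Real.rpow_one]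
  rw [hΓ₃, hΓ₂, hn₂, hn₁]
  field_simp

end GammaDensity

lemma pk_div_gamRec {μ : ℝ} (hμ : 0 ≤ μ) (a : ℕ → ℝ) (k : ℕ) (y : ℝ) :
    pk μ a k y / gamRec μ k = ∑ p ∈ antidiagonal k, emuTerm μ y p.1 * afunCoeff μ a p.2 := by
  rw [pk, sum_div,
    Nat.sum_antidiagonal_eq_sum_range_succ fun j r => emuTerm μ y j * afunCoeff μ a r]
  refine sum_congr rfl fun j _ => ?_
  have := (gamRec_pos hμ k).ne'
  have := (gamRec_pos hμ j).ne'
  have := (gamRec_pos hμ (k - j)).ne'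
  rw [emuTerm, afunCoeff]
  field_simp

lemma Dop_sub_sq_eq_tsum {μ lam : ℝ} (hμ : 0 ≤ μ) (hlam : 0 ≤ lam) (a : ℕ → ℝ) {n : ℕ} (hn : 0 < n)
    (x : ℝ) :
    Dop μ lam a n (fun t => (t - x) ^ 2) x = 1 / (emu μ (n * x) * Afun μ a 1) *
      ∑' k, (∑ p ∈ antidiagonal k, emuTerm μ (n * x) p.1 * afunCoeff μ a p.2) *
        ((dunklWeight μ k + lam + 1) * (dunklWeight μ k + lam + 2) / n ^ 2
          - 2 * x * (dunklWeight μ k + lam + 1) / n + x ^ 2) := by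
  rw [Dop]
  congr 1
  refine tsum_congr fun k => ?_
  have hmoment := rpow_div_Gamma_mul_integral_exp_neg_mul_rpow_mul_sub_sq (n := n)
    (Nat.cast_pos.mpr hn) (c := dunklWeight μ k + lam)
    (by linarith [dunklWeight_nonneg hμ k]) x
  rw [mul_assoc, ← pk_div_gamRec hμ]
  simp only [dunklWeight] at hmoment ⊢
  rw [hmoment]

lemma tendstoUniformlyOn_div_add_div_sq {α : Type*} {K : Set α} {u v : ℕ → α → ℝ} {U V : ℝ}
    (hu : ∀ n, ∀ x ∈ K, |u n x| ≤ U) (hv : ∀ n, ∀ x ∈ K, |v n x| ≤ V) :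
    TendstoUniformlyOn (fun n x => u n x / n + v n x / n ^ 2) 0 atTop K := by
  rw [Metric.tendstoUniformlyOn_iff]
  intro ε hε
  filter_upwards [eventually_ge_atTop 1,
    (tendsto_const_div_atTop_nhds_zero_nat (U + V)).eventually (gt_mem_nhds hε)] with n hn hUV
  intro x hx
  have hn' : (1 : ℝ) ≤ n := by exact_mod_cast hn
  have hn0 : (0 : ℝ) < n := zero_lt_one.trans_le hn'
  have hV : 0 ≤ V := (abs_nonneg _).trans (hv n x hx)
  rw [Pi.zero_apply, dist_zero_left, Real.norm_eq_abs]
  calc |u n x / n + v n x / n ^ 2| ≤ |u n x| / n + |v n x| / n ^ 2 :=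
        (abs_add_le _ _).trans_eq <| by
          rw [abs_div, abs_div, abs_of_pos hn0, abs_of_pos (pow_pos hn0 2)]
    _ ≤ U / n + V / n := by
        refine add_le_add (by gcongr; exact hu n x hx) ?_
        calc |v n x| / n ^ 2 ≤ V / n ^ 2 := by gcongr; exact hv n x hx
          _ ≤ V / n := div_le_div_of_nonneg_left hV hn0 (by nlinarith)
    _ = (U + V) / n := by ring
    _ < ε := hUV

lemma tendstoUniformlyOn_of_eq_second_moment_formula {K : Set ℝ} (hK : K ⊆ Set.Ici 0)
    (hKc : IsCompact K) {ρ : ℝ → ℝ} (hρ : ∀ y, 0 ≤ y → |ρ y| ≤ 1) {μ Q₁ Q₂ Q₃ Q₄ : ℝ}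
    {F : ℕ → ℝ → ℝ} (hF : ∀ n : ℕ, 1 ≤ n → ∀ x : ℝ, 0 ≤ x → F n x =
      (2 * x / n) * (1 + μ * ρ (n * x) * Q₁) + (1 / (n : ℝ) ^ 2) * ρ (n * x) * Q₂ +
        (1 / (n : ℝ) ^ 2) * Q₃ + (2 * μ ^ 2 / (n : ℝ) ^ 2) * Q₄) :
    TendstoUniformlyOn F 0 atTop K := by
  obtain ⟨X, hX⟩ := hKc.bddAbove
  refine (tendstoUniformlyOn_div_add_div_sq (u := fun n x => 2 * x * (1 + μ * ρ (n * x) * Q₁))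
    (v := fun n x => ρ (n * x) * Q₂ + Q₃ + 2 * μ ^ 2 * Q₄) (U := 2 * X * (1 + |μ| * |Q₁|))
    (V := |Q₂| + |Q₃| + 2 * μ ^ 2 * |Q₄|) (fun n x hx => ?_) (fun n x hx => ?_)).congr ?_
  · have hx0 : 0 ≤ x := hK hx
    have hρx := hρ (n * x) (by positivity)
    rw [abs_mul, abs_of_nonneg (by positivity : 0 ≤ 2 * x)]
    refine mul_le_mul (by linarith [hX hx]) ((abs_add_le _ _).trans ?_) (abs_nonneg _)
      (by linarith [hX hx])
    rw [abs_one, abs_mul, abs_mul]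
    gcongr
    exact mul_le_of_le_one_right (abs_nonneg μ) hρx
  · have hρx := hρ (n * x) (mul_nonneg n.cast_nonneg (hK hx))
    refine (abs_add_le _ _).trans (add_le_add ((abs_add_le _ _).trans (add_le_add ?_ le_rfl)) ?_)
    · rw [abs_mul]; exact mul_le_of_le_one_left (abs_nonneg _) hρx
    · rw [abs_mul, abs_of_nonneg (by positivity)]
  · filter_upwards [eventually_ge_atTop 1] with n hn x hx
    rw [hF n hn x (hK hx)]
    ring

theorem Dop_second_central_moment_general (μ lam : ℝ) (hμ : 0 ≤ μ) (hlam : 0 ≤ lam)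
    (a : ℕ → ℝ) (hA : AnalyticHyp μ a) (hA1 : Afun μ a 1 ≠ 0) :
    (∀ n : ℕ, 1 ≤ n → ∀ x : ℝ, 0 ≤ x →
      Dop μ lam a n (fun t => (t - x) ^ 2) x =
        (2 * x / n) * (1 + μ * (emu μ (-(n * x)) / emu μ (n * x)) *
            ((2 * Afun μ a (-1) - Afun μ a 1) / Afun μ a 1)) +
        (1 / (n : ℝ) ^ 2) * (emu μ (-(n * x)) / emu μ (n * x)) *
          (2 * μ * ((deriv (Afun μ a) 1 + deriv (Afun μ a) (-1)) / Afun μ a 1) +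
            μ * (2 * lam + 3) * ((Afun μ a 1 - Afun μ a (-1)) / Afun μ a 1)) +
        (1 / (n : ℝ) ^ 2) * (deriv (deriv (Afun μ a)) 1 / Afun μ a 1 +
          2 * (lam + 2) * (deriv (Afun μ a) 1 / Afun μ a 1) + (lam + 1) * (lam + 2)) +
        (2 * μ ^ 2 / (n : ℝ) ^ 2) * ((Afun μ a 1 - Afun μ a (-1)) / Afun μ a 1)) ∧
    (∀ K : Set ℝ, K ⊆ Set.Ici 0 → IsCompact K →
      TendstoUniformlyOn (fun (n : ℕ) (x : ℝ) => Dop μ lam a n (fun t => (t - x) ^ 2) x) 0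
        atTop K) := by
  refine ⟨?moment, fun K hK hKc => tendstoUniformlyOn_of_eq_second_moment_formula hK hKc
    (ρ := fun y => emu μ (-y) / emu μ y) (abs_emu_neg_div_emu_le_one hμ) ?moment⟩
  intro n hn x hx
  have hn0 : (n : ℝ) ≠ 0 := by positivity
  have hE := (zero_lt_one.trans_le (one_le_emu hμ (n * x) (by positivity))).ne'
  have hc₀ := hasSum_emuTerm hμ (n * x)
  have hcθ := hasSum_emuTerm_mul_theta hμ (n * x)
  have hrec := emuTerm_succ_mul_dunklWeight hμ (n * x)
  have hS₀ := hasSum_sum_antidiagonal_mul hc₀ (hasSum_afunCoeff hA)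
  have hS₁ := hasSum_sum_antidiagonal_mul_dunklWeight hc₀ hcθ
    (hasSum_mul_dunklWeight_of_eigen hrec hc₀) (hasSum_afunCoeff hA)
    (hasSum_afunCoeff_mul_theta hA) (hasSum_afunCoeff_mul_dunklWeight hA)
  have hS₂ := hasSum_sum_antidiagonal_mul_dunklWeight_sq hc₀ hcθ
    (hasSum_mul_dunklWeight_of_eigen hrec hc₀)
    (hasSum_mul_dunklWeight_mul_theta_of_eigen hrec hc₀ hcθ)
    (hasSum_mul_dunklWeight_sq_of_eigen hrec hc₀ hcθ) (hasSum_afunCoeff hA)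
    (hasSum_afunCoeff_mul_theta hA) (hasSum_afunCoeff_mul_dunklWeight hA)
    (hasSum_afunCoeff_mul_dunklWeight_mul_theta hA) (hasSum_afunCoeff_mul_dunklWeight_sq hA)
  rw [Dop_sub_sq_eq_tsum hμ hlam a hn x, (((hS₂.mul_left (1 / (n : ℝ) ^ 2)).add
    (hS₁.mul_left ((2 * lam + 3) / (n : ℝ) ^ 2 - 2 * x / n))).add
    (hS₀.mul_left ((lam + 1) * (lam + 2) / (n : ℝ) ^ 2 - 2 * x * (lam + 1) / n + x ^ 2))).congr_fun
    (fun k => by ring) |>.tsum_eq]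
  field_simp
  ring

theorem Dop_second_central_moment (μ lam : ℝ) (hμ : 0 ≤ μ) (hlam : 0 ≤ lam)
    (a : ℕ → ℝ) (ha0 : a 0 ≠ 0) (hA : AnalyticHyp μ a) (hA1 : Afun μ a 1 ≠ 0)
    (hpos : ∀ r : ℕ, 0 ≤ a r / Afun μ a 1) :
    (∀ n : ℕ, 1 ≤ n → ∀ x : ℝ, 0 ≤ x →
      Dop μ lam a n (fun t => (t - x) ^ 2) x =
        (2 * x / n) * (1 + μ * (emu μ (-(n * x)) / emu μ (n * x)) *
            ((2 * Afun μ a (-1) - Afun μ a 1) / Afun μ a 1)) +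
        (1 / (n : ℝ) ^ 2) * (emu μ (-(n * x)) / emu μ (n * x)) *
          (2 * μ * ((deriv (Afun μ a) 1 + deriv (Afun μ a) (-1)) / Afun μ a 1) +
            μ * (2 * lam + 3) * ((Afun μ a 1 - Afun μ a (-1)) / Afun μ a 1)) +
        (1 / (n : ℝ) ^ 2) * (deriv (deriv (Afun μ a)) 1 / Afun μ a 1 +
          2 * (lam + 2) * (deriv (Afun μ a) 1 / Afun μ a 1) + (lam + 1) * (lam + 2)) +
        (2 * μ ^ 2 / (n : ℝ) ^ 2) * ((Afun μ a 1 - Afun μ a (-1)) / Afun μ a 1)) ∧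
    (∀ K : Set ℝ, K ⊆ Set.Ici 0 → IsCompact K →
      TendstoUniformlyOn (fun (n : ℕ) (x : ℝ) => Dop μ lam a n (fun t => (t - x) ^ 2) x) 0
        atTop K) :=
  Dop_second_central_moment_general μ lam hμ hlam a hA hA1
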